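/- For every integer n ≥ 1 and every x ∈ ℂ that is not an integer, one has ∏_{m=1}^n (x+2m−1)/(x−2m) = g(x)·(−1)^n·Γ((x+1)/2 + n)/Γ(1 − x/2 + n), where g(x) := √π·2^{x−1}/(sin(πx/2)·Γ(x)). -/

import Mathlib

open Complex Finset Real

/-!
Each factor is `-((x+1)/2 + m - 1) / ((1 - x/2) + m - 1)`, so the product is `(-1)^n` times a
ratio of Pochhammer symbols, i.e.
`(-1)^n · Γ((x+1)/2 + n) Γ(1 - x/2) / (Γ((x+1)/2) Γ(1 - x/2 + n))`.
It remains that `g(x) = Γ(1 - x/2) / Γ((x+1)/2)`, which is the Legendre duplication formula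
combined with Euler's reflection formula, both at `x/2`.
-/

/-- `g(x) := √π · 2^(x-1) / (sin(πx/2) · Γ(x))`. -/
noncomputable def gFun (x : ℂ) : ℂ :=
  (Real.sqrt Real.pi : ℂ) * (2 : ℂ) ^ (x - 1) /
    (Complex.sin (Real.pi * x / 2) * Complex.Gamma x)

theorem sin_pi_mul_div_two_ne_zero {x : ℂ} (heven : ∀ k : ℤ, x ≠ 2 * k) :
    Complex.sin (π * x / 2) ≠ 0 := by
  rw [Complex.sin_ne_zero_iff]
  intro k hk
  have hπ : (π : ℂ) ≠ 0 := ofReal_ne_zero.mpr pi_ne_zero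
  exact heven k (mul_left_cancel₀ hπ (by linear_combination 2 * hk))

theorem gFun_mul_Gamma_add_one_div_two {x : ℂ} (heven : ∀ k : ℤ, x ≠ 2 * k)
    (hneg : ∀ m : ℕ, x ≠ -m) :
    gFun x * Gamma ((x + 1) / 2) = Gamma (1 - x / 2) := by
  have hsin := sin_pi_mul_div_two_ne_zero heven
  have hΓ : Gamma x ≠ 0 := Gamma_ne_zero hneg
  have hΓhalf : Gamma (x / 2) ≠ 0 :=
    Gamma_ne_zero fun m h => hneg (2 * m) (by push_cast; linear_combination 2 * h)
  have hsqrt : (√π : ℂ) * √π = π := by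
    rw [← ofReal_mul, Real.mul_self_sqrt pi_nonneg]
  have hpow : (2 : ℂ) ^ (x - 1) * 2 ^ (1 - x) = 1 := by
    rw [← cpow_add _ _ two_ne_zero, sub_add_sub_cancel', sub_self, cpow_zero]
  refine mul_right_cancel₀ hΓhalf ?_
  calc gFun x * Gamma ((x + 1) / 2) * Gamma (x / 2)
      = √π * 2 ^ (x - 1) * (Gamma (x / 2) * Gamma (x / 2 + 1 / 2)) /
          (sin (π * x / 2) * Gamma x) := by
        rw [gFun, add_div]; ring
    _ = (2 ^ (x - 1) * 2 ^ (1 - x)) * (√π * √π) / sin (π * x / 2) := by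
        rw [Complex.Gamma_mul_Gamma_add_half, mul_div_cancel₀ x two_ne_zero]
        field_simp
    _ = Gamma (1 - x / 2) * Gamma (x / 2) := by
        rw [hpow, hsqrt, one_mul, mul_comm (Complex.Gamma _), Complex.Gamma_mul_Gamma_one_sub,
          mul_div_assoc]

theorem prod_Icc_div_eq_ascPochhammer (x : ℂ) (n : ℕ) :
    ∏ m ∈ Icc 1 n, (x + 2 * (m : ℂ) - 1) / (x - 2 * (m : ℂ)) =
      (-1) ^ n * (ascPochhammer ℂ n).eval ((x + 1) / 2) /
        (ascPochhammer ℂ n).eval (1 - x / 2) := by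
  induction n with
  | zero => simp
  | succ n ih =>
    rw [prod_Icc_succ_top (by omega), ih, ascPochhammer_succ_eval, ascPochhammer_succ_eval]
    have hfactor : (x + 2 * ((n + 1 : ℕ) : ℂ) - 1) / (x - 2 * ((n + 1 : ℕ) : ℂ)) =
        -((x + 1) / 2 + n) / (1 - x / 2 + n) := by
      rw [show x + 2 * ((n + 1 : ℕ) : ℂ) - 1 = -2 * -((x + 1) / 2 + n) by push_cast; ring,
        show x - 2 * ((n + 1 : ℕ) : ℂ) = -2 * (1 - x / 2 + n) by push_cast; ring,
        mul_div_mul_left _ _ (by norm_num)]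
    rw [hfactor, div_mul_div_comm]
    ring

theorem stmt_1 (n : ℕ) (x : ℂ) (hx : ∀ k : ℤ, x ≠ (k : ℂ)) :
    ∏ m ∈ Finset.Icc 1 n, (x + 2 * (m : ℂ) - 1) / (x - 2 * (m : ℂ)) =
      gFun x * (-1) ^ n * Complex.Gamma ((x + 1) / 2 + n) /
        Complex.Gamma (1 - x / 2 + n) := by
  have hneg : ∀ m : ℕ, x ≠ -m := fun m => by exact_mod_cast hx (-m)
  have ha : ∀ m : ℕ, (x + 1) / 2 ≠ -m := fun m h =>
    hx (-(2 * m + 1)) (by push_cast; linear_combination 2 * h)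
  have hb : ∀ m : ℕ, 1 - x / 2 ≠ -m := fun m h =>
    hx (2 * (m + 1)) (by push_cast; linear_combination -2 * h)
  have hg : gFun x = Gamma (1 - x / 2) / Gamma ((x + 1) / 2) :=
    eq_div_of_mul_eq (Gamma_ne_zero ha)
      (gFun_mul_Gamma_add_one_div_two (fun k => by exact_mod_cast hx (2 * k)) hneg)
  rw [prod_Icc_div_eq_ascPochhammer, ← Gamma_add_nat_div_Gamma_eq _ ha,
    ← Gamma_add_nat_div_Gamma_eq _ hb, hg, div_div_eq_mul_div]
  ring
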